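/- Let C > 0 and let (ξ_{i,j})_{i,j≥1} be real random variables on a probability space such that for all integers 0 ≤ q ≤ p and 0 ≤ h ≤ l, E[ ( Σ_{i=q+1}^{p} Σ_{j=h+1}^{l} ξ_{i,j} )² ] ≤ C (p−q)(l−h). Then n^{−3/2} max_{1≤k≤n} max_{1≤l≤n} | Σ_{i=1}^{k} Σ_{j=1}^{l} ξ_{i,j} | converges to 0 in probability as n → ∞. -/

import Mathlib

/-!
Dyadic chaining. For `k < 2 ^ M` the interval `(0, k]` is the disjoint union, over the scales
`e < M`, of the gaps between the truncations `2 ^ (e + 1) ⌊k / 2 ^ (e + 1)⌋ ≤ 2 ^ e ⌊k / 2 ^ e⌋`,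
and each gap is empty or a dyadic interval `(b 2 ^ e, (b + 1) 2 ^ e]`. Hence a corner sum
`∑_{i ≤ k} ∑_{j ≤ l} ξ i j` with `k, l < 2 ^ M` is a sum of `M ^ 2` terms, each zero or a dyadic
rectangle sum, and by Cauchy–Schwarz its square is at most `M ^ 2` times the sum `D_M` of the
squares of all dyadic rectangle sums. At each pair of scales the rectangles tile `(0, 2 ^ M]²`, so
the moment bound gives `E D_M ≤ M ^ 2 C 4 ^ M`. With `2 ^ (M - 1) ≤ n < 2 ^ M`, Markov's
inequality for `D_M` bounds the probability by `C ε⁻² M ^ 4 4 ^ M / n ^ 3 = O(log⁴ n / n)`.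
-/

open MeasureTheory Finset Filter

def dyadicTrunc (e k : ℕ) : ℕ := 2 ^ e * (k / 2 ^ e)

lemma dyadicTrunc_eq_zero {M k : ℕ} (hk : k < 2 ^ M) : dyadicTrunc M k = 0 := by
  simp [dyadicTrunc, Nat.div_eq_of_lt hk]

lemma dyadicTrunc_le (e k : ℕ) : dyadicTrunc e k ≤ k := Nat.mul_div_le k (2 ^ e)

lemma dyadicTrunc_succ (e k : ℕ) : dyadicTrunc (e + 1) k = 2 ^ e * (2 * (k / 2 ^ e / 2)) := by
  rw [dyadicTrunc, pow_succ, Nat.div_div_eq_div_mul]; ring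

lemma dyadicTrunc_succ_le (e k : ℕ) : dyadicTrunc (e + 1) k ≤ dyadicTrunc e k := by
  rw [dyadicTrunc_succ]
  exact Nat.mul_le_mul_left _ (Nat.mul_div_le _ 2)

lemma dyadicTrunc_eq_or {M e k : ℕ} (hk : k < 2 ^ M) (he : e < M) :
    dyadicTrunc e k = dyadicTrunc (e + 1) k ∨
      ∃ b < 2 ^ (M - e), dyadicTrunc (e + 1) k = b * 2 ^ e ∧ dyadicTrunc e k = (b + 1) * 2 ^ e := by
  have hdiv := Nat.div_add_mod (k / 2 ^ e) 2
  rw [dyadicTrunc_succ]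
  rcases Nat.mod_two_eq_zero_or_one (k / 2 ^ e) with h | h
  · left
    rw [h, add_zero] at hdiv
    rw [dyadicTrunc, hdiv]
  · right
    refine ⟨2 * (k / 2 ^ e / 2), ?_, by ring, by rw [dyadicTrunc]; nth_rw 1 [← hdiv]; rw [h]; ring⟩
    have hle : (2 * (k / 2 ^ e / 2) + 1) * 2 ^ e ≤ k := by
      nth_rw 1 [← h, hdiv, mul_comm]; exact dyadicTrunc_le e k
    have hM : 2 ^ M = 2 ^ (M - e) * 2 ^ e := by rw [← pow_add, Nat.sub_add_cancel he.le]
    refine Nat.lt_of_mul_lt_mul_right (a := 2 ^ e) ?_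
    calc 2 * (k / 2 ^ e / 2) * 2 ^ e < (2 * (k / 2 ^ e / 2) + 1) * 2 ^ e :=
          Nat.mul_lt_mul_of_pos_right (lt_add_one _) (by positivity)
      _ ≤ k := hle
      _ < 2 ^ (M - e) * 2 ^ e := hM ▸ hk

lemma sum_range_sum_Ioc_dyadicTrunc {β : Type*} [AddCommMonoid β] (g : ℕ → β) (k N : ℕ) :
    ∑ e ∈ range N, ∑ i ∈ Ioc (dyadicTrunc (e + 1) k) (dyadicTrunc e k), g i
      = ∑ i ∈ Ioc (dyadicTrunc N k) k, g i := by
  induction N with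
  | zero => simp [dyadicTrunc]
  | succ N ih =>
    rw [sum_range_succ, ih, add_comm,
      sum_Ioc_consecutive _ (dyadicTrunc_succ_le N k) (dyadicTrunc_le N k)]

def rectSum (x : ℕ → ℕ → ℝ) (q p h l : ℕ) : ℝ := ∑ i ∈ Ioc q p, ∑ j ∈ Ioc h l, x i j

def dyadicEnergy (x : ℕ → ℕ → ℝ) (M : ℕ) : ℝ :=
  ∑ e ∈ range M, ∑ e' ∈ range M, ∑ b ∈ range (2 ^ (M - e)), ∑ b' ∈ range (2 ^ (M - e')),
    rectSum x (b * 2 ^ e) ((b + 1) * 2 ^ e) (b' * 2 ^ e') ((b' + 1) * 2 ^ e') ^ 2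

section Deterministic

variable (x : ℕ → ℕ → ℝ) {M k l : ℕ}

lemma rectSum_eq_sum_dyadic (hk : k < 2 ^ M) (hl : l < 2 ^ M) :
    rectSum x 0 k 0 l = ∑ e ∈ range M, ∑ e' ∈ range M,
      rectSum x (dyadicTrunc (e + 1) k) (dyadicTrunc e k)
        (dyadicTrunc (e' + 1) l) (dyadicTrunc e' l) := by
  have hdecomp (g : ℕ → ℝ) {m : ℕ} (hm : m < 2 ^ M) : ∑ i ∈ Ioc 0 m, g i =
      ∑ e ∈ range M, ∑ i ∈ Ioc (dyadicTrunc (e + 1) m) (dyadicTrunc e m), g i := by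
    rw [sum_range_sum_Ioc_dyadicTrunc, dyadicTrunc_eq_zero hm]
  simp only [rectSum, hdecomp _ hk, hdecomp _ hl, sum_comm (s := Ioc _ _) (t := range M)]

lemma sq_rectSum_dyadicTrunc_le {e e' : ℕ} (hk : k < 2 ^ M) (hl : l < 2 ^ M) (he : e < M)
    (he' : e' < M) :
    rectSum x (dyadicTrunc (e + 1) k) (dyadicTrunc e k)
        (dyadicTrunc (e' + 1) l) (dyadicTrunc e' l) ^ 2 ≤
      ∑ b ∈ range (2 ^ (M - e)), ∑ b' ∈ range (2 ^ (M - e')),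
        rectSum x (b * 2 ^ e) ((b + 1) * 2 ^ e) (b' * 2 ^ e') ((b' + 1) * 2 ^ e') ^ 2 := by
  have hnonneg : 0 ≤ ∑ b ∈ range (2 ^ (M - e)), ∑ b' ∈ range (2 ^ (M - e')),
      rectSum x (b * 2 ^ e) ((b + 1) * 2 ^ e) (b' * 2 ^ e') ((b' + 1) * 2 ^ e') ^ 2 := by
    positivity
  rcases dyadicTrunc_eq_or hk he with h | ⟨b, hb, hq, hp⟩
  · simpa [rectSum, h] using hnonneg
  rcases dyadicTrunc_eq_or hl he' with h' | ⟨b', hb', hq', hp'⟩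
  · simpa [rectSum, h'] using hnonneg
  rw [hq, hp, hq', hp']
  refine le_trans ?_ (single_le_sum (fun _ _ => by positivity) (mem_range.2 hb))
  exact single_le_sum (f := fun b' => rectSum x (b * 2 ^ e) ((b + 1) * 2 ^ e) (b' * 2 ^ e')
    ((b' + 1) * 2 ^ e') ^ 2) (fun _ _ => by positivity) (mem_range.2 hb')

lemma sq_rectSum_le_dyadicEnergy (hk : k < 2 ^ M) (hl : l < 2 ^ M) :
    rectSum x 0 k 0 l ^ 2 ≤ M ^ 2 * dyadicEnergy x M := by
  rw [rectSum_eq_sum_dyadic x hk hl, ← sum_product']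
  refine (sq_sum_le_card_mul_sum_sq ..).trans ?_
  rw [card_product, card_range, sum_product, dyadicEnergy]
  push_cast
  rw [sq]
  gcongr with e he e' he'
  exact sq_rectSum_dyadicTrunc_le x hk hl (mem_range.1 he) (mem_range.1 he')

end Deterministic

def maxPartialSum (x : ℕ → ℕ → ℝ) (n : ℕ) : ℝ :=
  (Icc 0 n).sup' (nonempty_Icc.mpr (Nat.zero_le n)) fun k =>
    (Icc 0 n).sup' (nonempty_Icc.mpr (Nat.zero_le n)) fun l =>
      |∑ i ∈ Icc 1 k, ∑ j ∈ Icc 1 l, x i j|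

lemma sq_maxPartialSum_le_dyadicEnergy (x : ℕ → ℕ → ℝ) {n M : ℕ} (hn : n < 2 ^ M) :
    maxPartialSum x n ^ 2 ≤ M ^ 2 * dyadicEnergy x M := by
  obtain ⟨k, hk, hk_eq⟩ := exists_mem_eq_sup' (nonempty_Icc.mpr (Nat.zero_le n)) fun k =>
    (Icc 0 n).sup' (nonempty_Icc.mpr (Nat.zero_le n)) fun l =>
      |∑ i ∈ Icc 1 k, ∑ j ∈ Icc 1 l, x i j|
  obtain ⟨l, hl, hl_eq⟩ := exists_mem_eq_sup' (nonempty_Icc.mpr (Nat.zero_le n)) fun l =>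
      |∑ i ∈ Icc 1 k, ∑ j ∈ Icc 1 l, x i j|
  rw [maxPartialSum, hk_eq, hl_eq, sq_abs]
  simpa [rectSum, ← Icc_add_one_left_eq_Ioc] using sq_rectSum_le_dyadicEnergy x
    ((mem_Icc.1 hk).2.trans_lt hn) ((mem_Icc.1 hl).2.trans_lt hn)

lemma integral_finsetSum_le_card_mul {Ω ι : Type*} [MeasurableSpace Ω] {μ : Measure Ω}
    {s : Finset ι} {f : ι → Ω → ℝ} {c : ℝ} (hf : ∀ i ∈ s, Integrable (f i) μ)
    (hc : ∀ i ∈ s, ∫ ω, f i ω ∂μ ≤ c) : ∫ ω, ∑ i ∈ s, f i ω ∂μ ≤ #s * c := by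
  rw [integral_finsetSum s hf, ← nsmul_eq_mul]
  exact sum_le_card_nsmul s _ c hc

section Probabilistic

variable {Ω : Type*} [MeasurableSpace Ω] {P : Measure Ω} {ξ : ℕ → ℕ → Ω → ℝ} {C : ℝ}

lemma integrable_dyadicEnergy
    (hint : ∀ q p h l, q ≤ p → h ≤ l → Integrable (fun ω => rectSum (ξ · · ω) q p h l ^ 2) P)
    (M : ℕ) : Integrable (fun ω => dyadicEnergy (ξ · · ω) M) P :=
  integrable_finsetSum _ fun _ _ => integrable_finsetSum _ fun _ _ =>
    integrable_finsetSum _ fun _ _ => integrable_finsetSum _ fun _ _ =>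
      hint _ _ _ _ (by gcongr; omega) (by gcongr; omega)

lemma integral_dyadicEnergy_le
    (hint : ∀ q p h l, q ≤ p → h ≤ l → Integrable (fun ω => rectSum (ξ · · ω) q p h l ^ 2) P)
    (hbound : ∀ q p h l, q ≤ p → h ≤ l →
      ∫ ω, rectSum (ξ · · ω) q p h l ^ 2 ∂P ≤ C * ((p : ℝ) - q) * ((l : ℝ) - h))
    (M : ℕ) : ∫ ω, dyadicEnergy (ξ · · ω) M ∂P ≤ M ^ 2 * (C * 4 ^ M) := by
  have hint' (e e' b b' : ℕ) : Integrable (fun ω =>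
      rectSum (ξ · · ω) (b * 2 ^ e) ((b + 1) * 2 ^ e) (b' * 2 ^ e') ((b' + 1) * 2 ^ e') ^ 2) P :=
    hint _ _ _ _ (by gcongr; omega) (by gcongr; omega)
  have hlevel {e e' : ℕ} (he : e ≤ M) (he' : e' ≤ M) :
      ∫ ω, ∑ b ∈ range (2 ^ (M - e)), ∑ b' ∈ range (2 ^ (M - e')),
        rectSum (ξ · · ω) (b * 2 ^ e) ((b + 1) * 2 ^ e) (b' * 2 ^ e') ((b' + 1) * 2 ^ e') ^ 2 ∂P
        ≤ C * 4 ^ M := by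
    refine (integral_finsetSum_le_card_mul
      (fun b _ => integrable_finsetSum _ fun b' _ => hint' e e' b b')
      (fun b _ => integral_finsetSum_le_card_mul (fun b' _ => hint' e e' b b')
        (fun b' _ => (hbound _ _ _ _ (by gcongr; omega) (by gcongr; omega)).trans_eq
          (c := C * 2 ^ e * 2 ^ e') (by push_cast; ring)))).trans_eq ?_
    have htile : (4 : ℝ) ^ M = 2 ^ (M - e) * 2 ^ e * (2 ^ (M - e') * 2 ^ e') := by
      rw [← pow_add, ← pow_add, Nat.sub_add_cancel he, Nat.sub_add_cancel he', ← mul_pow]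
      norm_num
    rw [card_range, card_range, htile]
    push_cast
    ring
  refine (integral_finsetSum_le_card_mul
    (fun e _ => integrable_finsetSum _ fun e' _ => integrable_finsetSum _ fun b _ =>
      integrable_finsetSum _ fun b' _ => hint' e e' b b')
    (fun e he => integral_finsetSum_le_card_mul
      (fun e' _ => integrable_finsetSum _ fun b _ =>
        integrable_finsetSum _ fun b' _ => hint' e e' b b')
      (fun e' he' => hlevel (mem_range.1 he).le (mem_range.1 he').le))).trans_eq ?_
  rw [card_range]
  ring

lemma measureReal_maxPartialSum_ge_le [IsFiniteMeasure P]
    (hint : ∀ q p h l, q ≤ p → h ≤ l → Integrable (fun ω => rectSum (ξ · · ω) q p h l ^ 2) P)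
    (hbound : ∀ q p h l, q ≤ p → h ≤ l →
      ∫ ω, rectSum (ξ · · ω) q p h l ^ 2 ∂P ≤ C * ((p : ℝ) - q) * ((l : ℝ) - h))
    {ε : ℝ} (hε : 0 < ε) {n M : ℕ} (hn : 0 < n) (hnM : n < 2 ^ M) :
    P.real {ω | ε ≤ ((n : ℝ) ^ ((3 : ℝ) / 2))⁻¹ * maxPartialSum (ξ · · ω) n} ≤
      C / ε ^ 2 * (M ^ 4 * 4 ^ M / n ^ 3) := by
  have hn' : (0 : ℝ) < n := Nat.cast_pos.2 hn
  have hc : 0 < ε ^ 2 * (n : ℝ) ^ 3 := by positivity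
  have hsub : {ω | ε ≤ ((n : ℝ) ^ ((3 : ℝ) / 2))⁻¹ * maxPartialSum (ξ · · ω) n} ⊆
      {ω | ε ^ 2 * (n : ℝ) ^ 3 ≤ M ^ 2 * dyadicEnergy (ξ · · ω) M} := by
    intro ω hω
    have hmax : ε * (n : ℝ) ^ ((3 : ℝ) / 2) ≤ maxPartialSum (ξ · · ω) n :=
      (le_inv_mul_iff₀' (by positivity)).1 hω
    calc ε ^ 2 * (n : ℝ) ^ 3 = (ε * (n : ℝ) ^ ((3 : ℝ) / 2)) ^ 2 := by
          rw [mul_pow, ← Real.rpow_natCast ((n : ℝ) ^ ((3 : ℝ) / 2)) 2, ← Real.rpow_mul hn'.le]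
          norm_num
      _ ≤ maxPartialSum (ξ · · ω) n ^ 2 := by gcongr
      _ ≤ M ^ 2 * dyadicEnergy (ξ · · ω) M := sq_maxPartialSum_le_dyadicEnergy _ hnM
  have hmarkov := mul_meas_ge_le_integral_of_nonneg
    (ae_of_all _ fun ω => by unfold dyadicEnergy; positivity)
    ((integrable_dyadicEnergy hint M).const_mul ((M : ℝ) ^ 2)) (ε ^ 2 * (n : ℝ) ^ 3)
  rw [integral_const_mul] at hmarkov
  calc P.real {ω | ε ≤ ((n : ℝ) ^ ((3 : ℝ) / 2))⁻¹ * maxPartialSum (ξ · · ω) n}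
      ≤ P.real {ω | ε ^ 2 * (n : ℝ) ^ 3 ≤ M ^ 2 * dyadicEnergy (ξ · · ω) M} :=
        measureReal_mono hsub
    _ ≤ M ^ 2 * (M ^ 2 * (C * 4 ^ M)) / (ε ^ 2 * (n : ℝ) ^ 3) := by
        rw [le_div_iff₀' hc]
        exact hmarkov.trans (by gcongr; exact integral_dyadicEnergy_le hint hbound M)
    _ = C / ε ^ 2 * (M ^ 4 * 4 ^ M / n ^ 3) := by
        field_simp

end Probabilistic

lemma tendsto_log_pow_mul_four_pow_div_cube :
    Tendsto (fun n : ℕ => ((Nat.log 2 n + 1 : ℕ) : ℝ) ^ 4 * 4 ^ (Nat.log 2 n + 1) / (n : ℝ) ^ 3)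
      atTop (nhds 0) := by
  have hlog : Tendsto (fun n => Nat.log 2 n + 1) atTop atTop :=
    (tendsto_add_atTop_nat 1).comp <| tendsto_atTop_atTop.2 fun b =>
      ⟨2 ^ b, fun _ hn => Nat.le_log_of_pow_le one_lt_two hn⟩
  have hlim := ((tendsto_pow_const_div_const_pow_of_one_lt 4 one_lt_two).comp hlog).const_mul 8
  rw [mul_zero] at hlim
  refine squeeze_zero' (Eventually.of_forall fun n => by positivity) ?_ hlim
  filter_upwards [eventually_ge_atTop 1] with n hn
  have hpow : (2 : ℝ) ^ Nat.log 2 n ≤ n := by exact_mod_cast Nat.pow_log_le_self 2 (by omega)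
  rw [Function.comp_apply, div_le_iff₀ (by positivity)]
  calc ((Nat.log 2 n + 1 : ℕ) : ℝ) ^ 4 * 4 ^ (Nat.log 2 n + 1)
      = 8 * (((Nat.log 2 n + 1 : ℕ) : ℝ) ^ 4 / 2 ^ (Nat.log 2 n + 1)) * (2 ^ Nat.log 2 n) ^ 3 := by
        rw [pow_succ 4, show (4 : ℝ) ^ Nat.log 2 n = (2 ^ Nat.log 2 n) ^ 2 by
          rw [← pow_mul, mul_comm, pow_mul]; norm_num]
        field_simp
        ring
    _ ≤ 8 * (((Nat.log 2 n + 1 : ℕ) : ℝ) ^ 4 / 2 ^ (Nat.log 2 n + 1)) * (n : ℝ) ^ 3 := by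
        gcongr

theorem stmt_12_general {Ω : Type*} [MeasurableSpace Ω] (P : Measure Ω)
    [IsProbabilityMeasure P] (C : ℝ)
    (ξ : ℕ → ℕ → Ω → ℝ)
    (hmom : ∀ q p h l : ℕ, q ≤ p → h ≤ l →
      Integrable
        (fun ω => (∑ i ∈ Icc (q + 1) p, ∑ j ∈ Icc (h + 1) l, ξ i j ω) ^ 2) P ∧
      ∫ ω, (∑ i ∈ Icc (q + 1) p, ∑ j ∈ Icc (h + 1) l, ξ i j ω) ^ 2 ∂P
        ≤ C * ((p : ℝ) - (q : ℝ)) * ((l : ℝ) - (h : ℝ))) :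
    ∀ ε : ℝ, 0 < ε →
      Tendsto (fun n : ℕ =>
          (P {ω | ε ≤ ((n : ℝ) ^ ((3 : ℝ) / 2))⁻¹ *
              (Icc 0 n).sup' (Finset.nonempty_Icc.mpr (Nat.zero_le n)) (fun k =>
                (Icc 0 n).sup' (Finset.nonempty_Icc.mpr (Nat.zero_le n)) (fun l =>
                  |∑ i ∈ Icc 1 k, ∑ j ∈ Icc 1 l, ξ i j ω|))}).toReal)
        atTop (nhds 0) := by
  intro ε hε
  simp only [Icc_add_one_left_eq_Ioc] at hmom
  have hlim := tendsto_log_pow_mul_four_pow_div_cube.const_mul (C / ε ^ 2)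
  rw [mul_zero] at hlim
  refine squeeze_zero' (Eventually.of_forall fun n => ENNReal.toReal_nonneg) ?_ hlim
  filter_upwards [eventually_ge_atTop 1] with n hn
  exact measureReal_maxPartialSum_ge_le (fun q p h l hqp hhl => (hmom q p h l hqp hhl).1)
    (fun q p h l hqp hhl => (hmom q p h l hqp hhl).2) hε hn (Nat.lt_pow_succ_log_self one_lt_two n)

/-- Negligibility of the degenerate part: if the partial sums of the array `ξ`
over every index rectangle have second moment bounded by `C·(area)`, then
`n^{−3/2} max_{1≤k,l≤n} |Σ_{i≤k} Σ_{j≤l} ξ_{i,j}| → 0` in probability.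
(The max is taken over `Icc 0 n`; the extra indices `k = 0` or `l = 0` contribute
the value `|0| = 0` and do not change the maximum for `n ≥ 1`.) -/
theorem stmt_12 {Ω : Type*} [MeasurableSpace Ω] (P : Measure Ω)
    [IsProbabilityMeasure P] (C : ℝ) (hC : 0 < C)
    (ξ : ℕ → ℕ → Ω → ℝ) (hmeas : ∀ i j, Measurable (ξ i j))
    (hmom : ∀ q p h l : ℕ, q ≤ p → h ≤ l →
      Integrable
        (fun ω => (∑ i ∈ Icc (q + 1) p, ∑ j ∈ Icc (h + 1) l, ξ i j ω) ^ 2) P ∧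
      ∫ ω, (∑ i ∈ Icc (q + 1) p, ∑ j ∈ Icc (h + 1) l, ξ i j ω) ^ 2 ∂P
        ≤ C * ((p : ℝ) - (q : ℝ)) * ((l : ℝ) - (h : ℝ))) :
    ∀ ε : ℝ, 0 < ε →
      Tendsto (fun n : ℕ =>
          (P {ω | ε ≤ ((n : ℝ) ^ ((3 : ℝ) / 2))⁻¹ *
              (Icc 0 n).sup' (Finset.nonempty_Icc.mpr (Nat.zero_le n)) (fun k =>
                (Icc 0 n).sup' (Finset.nonempty_Icc.mpr (Nat.zero_le n)) (fun l =>
                  |∑ i ∈ Icc 1 k, ∑ j ∈ Icc 1 l, ξ i j ω|))}).toReal)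
        atTop (nhds 0) :=
  stmt_12_general P C ξ hmom
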